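/- For integers N ≥ 2 and H with 1 ≤ H ≤ N, assuming (a) Gallagher-type identity ∫₀¹|S₀(α,x)|²K(α,H)dα = (1/H)∫_{-∞}^∞ |∑_{t<n<t+H, n≤x} Λ₀(n)|² dt and (b) the RH bounds I(x) ≪ x², J(x,h) ≪ hx(log(2x/h))², together with averaging over x ∈ [N,2N], one has (1/N)∫_N^{2N} ∫₀¹ |S₀(α,x)|² K(α,N) dα dx ≤ C N for an absolute constant C. -/

import Mathlib

open Finset intervalIntegral MeasureTheory

noncomputable def e (u : ℝ) : ℂ := Complex.exp (2 * Real.pi * Complex.I * u)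

/-- `S₀(α, x) = ∑_{n ≤ x} (Λ(n) - 1) e(nα)`. -/
noncomputable def S0 (α : ℝ) (x : ℝ) : ℂ :=
  ∑ n ∈ Finset.Icc 1 ⌊x⌋₊, ((ArithmeticFunction.vonMangoldt n - 1 : ℝ) : ℂ) * e (n * α)

/-- The (real-valued) Fejér kernel `K(α, H) = ∑_{|n| ≤ H} (1 - |n|/H) e(nα)`. -/
noncomputable def K (α : ℝ) (H : ℕ) : ℝ :=
  (∑ n ∈ Finset.Icc (-(H : ℤ)) (H : ℤ), ((1 - (|n| : ℝ) / H : ℝ) : ℂ) * e (n * α)).re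

/-- `∑_{t < n < t + H, n ≤ x} Λ₀(n)`. -/
noncomputable def W (x : ℝ) (H : ℕ) (t : ℝ) : ℝ :=
  ∑ n ∈ Finset.Icc 1 ⌊x⌋₊,
    if t < (n : ℝ) ∧ (n : ℝ) < t + H then ArithmeticFunction.vonMangoldt n - 1 else 0

/-- Chebyshev `ψ(t) = ∑_{m ≤ t} Λ(m)`. -/
noncomputable def psi (t : ℝ) : ℝ :=
  ∑ m ∈ Finset.Icc 1 ⌊t⌋₊, ArithmeticFunction.vonMangoldt m

/-!
By the Gallagher identity the inner integral at `x` is `N⁻¹ ∫ W(x, N, t)² dt`. For non-integral `t`,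
`W(x, N, t)` is a difference of two values at integers `≤ ⌊x⌋` of the summatory function `ψ₀` of
`Λ₀ = Λ - 1`, so `∫ W² ≤ 4 ∑_{m < ⌊x⌋} ψ₀(m)² + 2N ψ₀(x)²`. As `ψ₀(t) = ψ(t) - t + O(1)`, the sum is
`≪ I(x) + x`, and averaging `ψ₀(x)² ≪ (ψ(x) - x)² + 1` over `x ∈ [N, 2N]` costs `≪ I(2N)/N + 1`.
The bound `I(x) ≪ x²` then gives `O(N)`.
-/
lemma psi_nonneg (t : ℝ) : 0 ≤ psi t :=
  sum_nonneg fun _ _ => ArithmeticFunction.vonMangoldt_nonneg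

lemma psi_mono : Monotone psi := fun _ _ hst =>
  sum_le_sum_of_subset_of_nonneg (Icc_subset_Icc le_rfl (Nat.floor_le_floor hst))
    fun _ _ _ => ArithmeticFunction.vonMangoldt_nonneg

lemma intervalIntegrable_sq_psi_sub (a b : ℝ) :
    IntervalIntegrable (fun t => (psi t - t) ^ 2) volume a b := by
  have hψψ : IntervalIntegrable (fun t => psi t * psi t) volume a b :=
    (psi_mono.mul psi_mono psi_nonneg psi_nonneg).intervalIntegrable
  have htψ : IntervalIntegrable (fun t => t * psi t) volume a b :=
    psi_mono.intervalIntegrable.continuousOn_mul continuousOn_id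
  convert (hψψ.sub (htψ.const_mul 2)).add ((continuous_pow 2).intervalIntegrable a b) using 1
  funext t
  ring

lemma integral_sq_psi_sub_mono {a b c d : ℝ} (hca : c ≤ a) (hab : a ≤ b) (hbd : b ≤ d) :
    ∫ t in a..b, (psi t - t) ^ 2 ≤ ∫ t in c..d, (psi t - t) ^ 2 :=
  integral_mono_interval hca hab hbd (Filter.Eventually.of_forall fun _ => sq_nonneg _)
    (intervalIntegrable_sq_psi_sub c d)

noncomputable def psi0 (t : ℝ) : ℝ :=
  ∑ n ∈ Icc 1 ⌊t⌋₊, (ArithmeticFunction.vonMangoldt n - 1 : ℝ)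

lemma psi0_natCast (m : ℕ) :
    psi0 m = ∑ n ∈ Icc 1 m, (ArithmeticFunction.vonMangoldt n - 1 : ℝ) := by
  rw [psi0, Nat.floor_natCast]

lemma psi0_natFloor (t : ℝ) : psi0 ⌊t⌋₊ = psi0 t := by
  rw [psi0_natCast, psi0]

lemma psi0_eq_psi_sub_natFloor (t : ℝ) : psi0 t = psi t - ⌊t⌋₊ := by
  simp [psi0, psi, sum_sub_distrib]

lemma sq_psi0_le {t : ℝ} (ht : 0 ≤ t) : psi0 t ^ 2 ≤ 2 * (psi t - t) ^ 2 + 2 := by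
  have h₀ := Nat.floor_le ht
  have h₁ := Nat.lt_floor_add_one t
  rw [psi0_eq_psi_sub_natFloor]
  nlinarith [sq_nonneg (psi t - t - (t - ⌊t⌋₊))]

lemma sum_range_sq_psi0_le (X : ℕ) :
    ∑ m ∈ range X, psi0 m ^ 2 ≤ 2 * (∫ t in (0 : ℝ)..X, (psi t - t) ^ 2) + 2 * X := by
  have hf (a b : ℝ) : IntervalIntegrable (fun t => 2 * (psi t - t) ^ 2 + 2) volume a b :=
    ((intervalIntegrable_sq_psi_sub a b).const_mul 2).add intervalIntegrable_const
  have hstep (m : ℕ) :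
      psi0 m ^ 2 ≤ ∫ t in (m : ℝ)..((m + 1 : ℕ) : ℝ), (2 * (psi t - t) ^ 2 + 2) := by
    have hm : (m : ℝ) ≤ ((m + 1 : ℕ) : ℝ) := by push_cast; linarith
    calc psi0 m ^ 2 = ∫ _ in (m : ℝ)..((m + 1 : ℕ) : ℝ), psi0 m ^ 2 := by simp
      _ ≤ _ := integral_mono_on_of_le_Ioo hm intervalIntegrable_const (hf _ _) fun t ht => by
        have hfloor : ⌊t⌋₊ = m := Nat.floor_eq_on_Ico m t ⟨ht.1.le, by exact_mod_cast ht.2⟩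
        rw [← hfloor, psi0_natFloor]
        exact sq_psi0_le ((Nat.cast_nonneg m).trans ht.1.le)
  calc ∑ m ∈ range X, psi0 m ^ 2
      ≤ ∑ m ∈ range X, ∫ t in (m : ℝ)..((m + 1 : ℕ) : ℝ), (2 * (psi t - t) ^ 2 + 2) :=
        sum_le_sum fun m _ => hstep m
    _ = ∫ t in (0 : ℝ)..X, (2 * (psi t - t) ^ 2 + 2) := by
        simpa using sum_integral_adjacent_intervals (a := fun k : ℕ => (k : ℝ)) fun k _ => hf _ _
    _ = 2 * (∫ t in (0 : ℝ)..X, (psi t - t) ^ 2) + 2 * X := by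
        rw [integral_add ((intervalIntegrable_sq_psi_sub _ _).const_mul 2) intervalIntegrable_const,
          intervalIntegral.integral_const_mul, intervalIntegral.integral_const, sub_zero,
          smul_eq_mul]
        ring

lemma sum_Icc_ite_le (f : ℕ → ℝ) (X : ℕ) (j : ℤ) :
    ∑ n ∈ Icc 1 X, (if (n : ℤ) ≤ j then f n else 0) = ∑ n ∈ Icc 1 (min X j.toNat), f n := by
  rw [← sum_filter]
  congr 1
  ext n
  simp only [mem_filter, mem_Icc]
  omega

lemma W_eq_psi0_sub {x t : ℝ} (H : ℕ) (ht : (⌊t⌋ : ℝ) ≠ t) :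
    W x H t = psi0 (min ⌊x⌋₊ (⌊t⌋ + H).toNat : ℕ) - psi0 (min ⌊x⌋₊ ⌊t⌋.toNat : ℕ) := by
  have hlt (z : ℤ) : (z : ℝ) < t ↔ z ≤ ⌊t⌋ :=
    ⟨fun h => Int.le_floor.2 h.le, fun h => (Int.le_floor.1 h).lt_of_ne fun hz => ht (by
      rw [← hz, Int.floor_intCast])⟩
  have hcond (n : ℕ) : (t < n ∧ n < t + H) ↔ ((n : ℤ) ≤ ⌊t⌋ + H ∧ ¬ (n : ℤ) ≤ ⌊t⌋) := by
    have h₁ := hlt (n - H)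
    push_cast at h₁
    rw [not_le, Int.floor_lt, ← sub_lt_iff_lt_add, h₁, sub_le_iff_le_add, and_comm]
    norm_cast
  simp only [W, psi0_natCast, ← sum_Icc_ite_le, ← sum_sub_distrib]
  refine sum_congr rfl fun n _ => ?_
  rw [if_congr (hcond n) rfl rfl]
  split_ifs <;> first | omega | ring

lemma integral_comp_intFloor (g : ℤ → ℝ) (s : Finset ℤ) (hg : ∀ k ∉ s, g k = 0) :
    ∫ t : ℝ, g ⌊t⌋ = ∑ k ∈ s, g k := by
  have hstep : (fun t : ℝ => g ⌊t⌋) =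
      fun t => ∑ k ∈ s, (Set.Ico (k : ℝ) (k + 1)).indicator (fun _ => g k) t := by
    funext t
    have hmem (k : ℤ) : t ∈ Set.Ico (k : ℝ) (k + 1) ↔ ⌊t⌋ = k := by
      rw [Int.floor_eq_iff, Set.mem_Ico]
    simp only [Set.indicator_apply, hmem, sum_ite_eq]
    split_ifs with h
    · rfl
    · exact hg _ h
  have hint (k : ℤ) : Integrable ((Set.Ico (k : ℝ) (k + 1)).indicator fun _ => g k) :=
    (integrable_indicator_iff measurableSet_Ico).2 (integrableOn_const measure_Ico_lt_top.ne)
  rw [hstep, integral_finsetSum s fun k _ => hint k]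
  refine sum_congr rfl fun k _ => ?_
  simp [integral_indicator_const _ measurableSet_Ico]

-- `j - H` is truncated subtraction: windows reaching below `0` are cut off at `0`.
lemma integral_W_sq_eq (x : ℝ) (H : ℕ) :
    ∫ t, W x H t ^ 2 = ∑ j ∈ range (⌊x⌋₊ + H),
      (psi0 (min ⌊x⌋₊ j : ℕ) - psi0 (min ⌊x⌋₊ (j - H) : ℕ)) ^ 2 := by
  set X := ⌊x⌋₊
  set g : ℤ → ℝ := fun k => (psi0 (min X (k + H).toNat : ℕ) - psi0 (min X k.toNat : ℕ)) ^ 2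
  have hae : (fun t => W x H t ^ 2) =ᵐ[volume] fun t => g ⌊t⌋ := by
    have hnull : ∀ᵐ t : ℝ, t ∉ Set.range ((↑) : ℤ → ℝ) :=
      measure_eq_zero_iff_ae_notMem.1 ((Set.countable_range _).measure_zero _)
    filter_upwards [hnull] with t ht
    rw [W_eq_psi0_sub H fun h => ht ⟨_, h⟩]
  have hsupp : ∀ k ∉ (range (X + H)).image (fun j : ℕ => (j : ℤ) - H), g k = 0 := by
    intro k hk
    have : min X (k + H).toNat = min X k.toNat := by
      by_contra hne
      exact hk (mem_image.2 ⟨(k + H).toNat, mem_range.2 (by omega), by omega⟩)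
    simp only [g]
    rw [this, sub_self, zero_pow two_ne_zero]
  rw [integral_congr_ae hae, integral_comp_intFloor g _ hsupp,
    sum_image fun i _ j _ hij => by simpa using hij]
  refine sum_congr rfl fun j _ => ?_
  simp only [g]
  congr 5 <;> omega

lemma sum_sq_sub_shift_le (u : ℕ → ℝ) (hu : u 0 = 0) (X H : ℕ) :
    ∑ j ∈ range (X + H), (u (min X j) - u (min X (j - H))) ^ 2
      ≤ 4 * ∑ m ∈ range X, u m ^ 2 + 2 * H * u X ^ 2 := by
  have hlead : ∑ j ∈ range (X + H), u (min X j) ^ 2 = ∑ m ∈ range X, u m ^ 2 + H * u X ^ 2 := by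
    rw [sum_range_add]
    congr 1
    · exact sum_congr rfl fun m hm => by rw [min_eq_right (mem_range.1 hm).le]
    · simp
  have hlag : ∑ j ∈ range (X + H), u (min X (j - H)) ^ 2 = ∑ m ∈ range X, u m ^ 2 := by
    rw [add_comm, sum_range_add]
    have hlow : ∀ j ∈ range H, u (min X (j - H)) ^ 2 = 0 := fun j hj => by
      rw [Nat.sub_eq_zero_of_le (mem_range.1 hj).le, _root_.min_zero, hu, zero_pow two_ne_zero]
    rw [sum_eq_zero hlow, zero_add]
    exact sum_congr rfl fun m hm => by
      rw [Nat.add_sub_cancel_left, min_eq_right (mem_range.1 hm).le]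
  calc ∑ j ∈ range (X + H), (u (min X j) - u (min X (j - H))) ^ 2
      ≤ ∑ j ∈ range (X + H), (2 * u (min X j) ^ 2 + 2 * u (min X (j - H)) ^ 2) :=
        sum_le_sum fun j _ => by nlinarith [sq_nonneg (u (min X j) + u (min X (j - H)))]
    _ = 4 * ∑ m ∈ range X, u m ^ 2 + 2 * H * u X ^ 2 := by
        rw [sum_add_distrib, ← mul_sum, ← mul_sum, hlead, hlag]
        ring

lemma integral_W_sq_le {x : ℝ} (hx : 0 ≤ x) (H : ℕ) :
    ∫ t, W x H t ^ 2
      ≤ 8 * (∫ t in (0 : ℝ)..x, (psi t - t) ^ 2) + 8 * x + 4 * H * ((psi x - x) ^ 2 + 1) := by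
  have hsum := sum_range_sq_psi0_le ⌊x⌋₊
  have hI := integral_sq_psi_sub_mono le_rfl (Nat.cast_nonneg ⌊x⌋₊) (Nat.floor_le hx)
  have hX : (⌊x⌋₊ : ℝ) ≤ x := Nat.floor_le hx
  have hend : psi0 ⌊x⌋₊ ^ 2 ≤ 2 * (psi x - x) ^ 2 + 2 := psi0_natFloor x ▸ sq_psi0_le hx
  have hH := mul_le_mul_of_nonneg_left hend (Nat.cast_nonneg H : (0 : ℝ) ≤ H)
  rw [integral_W_sq_eq]
  calc _ ≤ 4 * ∑ m ∈ range ⌊x⌋₊, psi0 m ^ 2 + 2 * H * psi0 ⌊x⌋₊ ^ 2 :=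
        sum_sq_sub_shift_le (fun m => psi0 m) (by simp [psi0]) _ _
    _ ≤ _ := by linarith

lemma intervalIntegral_mono_of_nonneg {f g : ℝ → ℝ} {a b : ℝ} (hab : a ≤ b)
    (hf : ∀ x ∈ Set.Ioc a b, 0 ≤ f x) (hg : IntervalIntegrable g volume a b)
    (hfg : ∀ x ∈ Set.Ioc a b, f x ≤ g x) :
    ∫ x in a..b, f x ≤ ∫ x in a..b, g x := by
  rw [integral_of_le hab, integral_of_le hab]
  exact integral_mono_of_nonneg (ae_restrict_of_forall_mem measurableSet_Ioc hf) hg.1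
    (ae_restrict_of_forall_mem measurableSet_Ioc hfg)

theorem fejer_average_bound_general (C₂ : ℝ)
    (ha : ∀ x : ℝ, ∀ H : ℕ, 0 < H →
      (∫ α in (0:ℝ)..1, ‖S0 α x‖ ^ 2 * K α H) = (1 / H) * ∫ t : ℝ, (W x H t) ^ 2)
    (hI : ∀ x : ℝ, 1 ≤ x → (∫ t in (0:ℝ)..x, (psi t - t) ^ 2) ≤ C₂ * x ^ 2) :
    ∃ C : ℝ, ∀ N : ℕ, 2 ≤ N →
      (1 / N) * (∫ x in (N : ℝ)..(2 * N : ℝ), ∫ α in (0:ℝ)..1, ‖S0 α x‖ ^ 2 * K α N)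
        ≤ C * N := by
  refine ⟨48 * C₂ + 10, fun N hN => ?_⟩
  have hN₂ : (2 : ℝ) ≤ N := by exact_mod_cast hN
  set I := ∫ t in (0 : ℝ)..(2 * N), (psi t - t) ^ 2
  have hIC : I ≤ C₂ * (2 * N) ^ 2 := hI _ (by linarith)
  have hpointwise : ∀ x ∈ Set.Ioc (N : ℝ) (2 * N),
      ∫ α in (0:ℝ)..1, ‖S0 α x‖ ^ 2 * K α N ≤ 8 * I / N + 20 + 4 * (psi x - x) ^ 2 := by
    intro x ⟨hNx, hx2N⟩
    have hW := integral_W_sq_le (by linarith : 0 ≤ x) N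
    have hIx := integral_sq_psi_sub_mono le_rfl (by linarith : (0 : ℝ) ≤ x) hx2N
    calc ∫ α in (0:ℝ)..1, ‖S0 α x‖ ^ 2 * K α N
        ≤ 1 / N * (8 * I + 16 * N + 4 * N * ((psi x - x) ^ 2 + 1)) := by
          rw [ha x N (by omega)]
          gcongr
          linarith
      _ = 8 * I / N + 20 + 4 * (psi x - x) ^ 2 := by
          field_simp
          ring
  have hmean : ∫ x in (N : ℝ)..(2 * N), ∫ α in (0:ℝ)..1, ‖S0 α x‖ ^ 2 * K α N
      ≤ ∫ x in (N : ℝ)..(2 * N), (8 * I / N + 20 + 4 * (psi x - x) ^ 2) := by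
    refine intervalIntegral_mono_of_nonneg (by linarith) (fun x _ => ?_)
      (intervalIntegrable_const.add ((intervalIntegrable_sq_psi_sub _ _).const_mul 4)) hpointwise
    rw [ha x N (by omega)]
    exact mul_nonneg (by positivity) (integral_nonneg fun t => sq_nonneg _)
  have htail : ∫ x in (N : ℝ)..(2 * N), (psi x - x) ^ 2 ≤ I :=
    integral_sq_psi_sub_mono (Nat.cast_nonneg N) (by linarith) le_rfl
  rw [integral_add intervalIntegrable_const ((intervalIntegrable_sq_psi_sub _ _).const_mul 4),
    intervalIntegral.integral_const, intervalIntegral.integral_const_mul, smul_eq_mul,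
    show (2 * N - N : ℝ) * (8 * I / N + 20) = 8 * I + 20 * N by field_simp; ring] at hmean
  calc 1 / (N : ℝ) * ∫ x in (N : ℝ)..(2 * N), ∫ α in (0:ℝ)..1, ‖S0 α x‖ ^ 2 * K α N
      ≤ 1 / N * ((48 * C₂ + 10) * N ^ 2) := by
        gcongr
        nlinarith
    _ = (48 * C₂ + 10) * N := by
        field_simp

theorem fejer_average_bound (C₂ C₃ : ℝ)
    (ha : ∀ x : ℝ, ∀ H : ℕ, 0 < H →
      (∫ α in (0:ℝ)..1, ‖S0 α x‖ ^ 2 * K α H) = (1 / H) * ∫ t : ℝ, (W x H t) ^ 2)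
    (hI : ∀ x : ℝ, 1 ≤ x → (∫ t in (0:ℝ)..x, (psi t - t) ^ 2) ≤ C₂ * x ^ 2)
    (hJ : ∀ x h : ℝ, 1 ≤ h → h ≤ x →
      (∫ t in (0:ℝ)..x, (psi (t + h) - psi t - h) ^ 2) ≤ C₃ * h * x * (Real.log (2 * x / h)) ^ 2) :
    ∃ C : ℝ, ∀ N : ℕ, 2 ≤ N →
      (1 / N) * (∫ x in (N : ℝ)..(2 * N : ℝ), ∫ α in (0:ℝ)..1, ‖S0 α x‖ ^ 2 * K α N)
        ≤ C * N :=
  fejer_average_bound_general C₂ ha hI
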